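/- arXiv:1806.00919 — 3 statements merged into one kernel-verified Lean document; each statement's English description precedes it below -/
import Mathlib

section
/- Let S be a nonempty finite set and Y a finite label set. Let Q : S → Y → [0,1] with ∑_{y∈Y} Q(y|x) = 1 for all x ∈ S. Define P(x|y) = Q(y|x) / ∑_{x'∈S} Q(y|x') whenever the denominator is nonzero, and T(y'|y) = ∑_{x∈S} P(x|y) Q(y'|x). Then T is diagonal (i.e., T(y'|y) = δ_{y,y'} for all y,y') if and only if Q(y|x) ∈ {0,1} for all x ∈ S, y ∈ Y, and for every y ∈ Y the set {x ∈ S : Q(y|x) = 1} is nonempty. -/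
/-!
Write `D y = ∑ x, Q(y|x)`, so that `T(y'|y) = (∑ x, Q(y|x) Q(y'|x)) / D y`. On the diagonal,
`T(y|y) = 1` forces `D y ≠ 0` and `∑ x, Q(y|x)² = ∑ x, Q(y|x)`; since `Q(y|x)(1 - Q(y|x)) ≥ 0`
this happens only for `{0, 1}`-valued `Q`, and `D y ≠ 0` then gives a confident instance.
Conversely, a `{0, 1}`-valued row summing to `1` is an indicator, so `Q(y|x) Q(y'|x)` vanishes
for `y' ≠ y` and the numerator is `δ_{y y'} D y` with `D y > 0`.
-/

open Finset

section
variable {ι : Type*} [Fintype ι]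

theorem sum_mul_self_eq_sum_iff {q : ι → ℝ} (hq : ∀ i, q i ∈ Set.Icc (0 : ℝ) 1) :
    ∑ i, q i * q i = ∑ i, q i ↔ ∀ i, q i = 0 ∨ q i = 1 := by
  have hnonneg : ∀ i ∈ univ, 0 ≤ q i * (1 - q i) :=
    fun i _ => mul_nonneg (hq i).1 (sub_nonneg.mpr (hq i).2)
  have hdiff : ∑ i, q i - ∑ i, q i * q i = ∑ i, q i * (1 - q i) := by
    rw [← sum_sub_distrib]
    exact sum_congr rfl fun i _ => by ring
  rw [eq_comm, ← sub_eq_zero, hdiff, sum_eq_zero_iff_of_nonneg hnonneg]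
  simp only [mem_univ, true_implies, mul_eq_zero, sub_eq_zero, eq_comm (a := (1 : ℝ))]

theorem eq_zero_of_sum_eq_one_of_eq_one {f : ι → ℝ} (hf : ∀ i, 0 ≤ f i) (hsum : ∑ i, f i = 1)
    {i j : ι} (hi : f i = 1) (hji : j ≠ i) : f j = 0 := by
  classical
  have hrest : ∑ k ∈ univ.erase i, f k = 0 := by
    rw [← add_sum_erase univ f (mem_univ i), hi] at hsum
    linarith
  exact (sum_eq_zero_iff_of_nonneg fun k _ => hf k).mp hrest j (mem_erase.mpr ⟨hji, mem_univ j⟩)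

theorem mul_eq_ite_of_sum_eq_one [DecidableEq ι] {f : ι → ℝ} (hf : ∀ i, 0 ≤ f i)
    (hsum : ∑ i, f i = 1) {i : ι} (hi : f i = 0 ∨ f i = 1) (j : ι) :
    f i * f j = if j = i then f i else 0 := by
  split_ifs with hji
  · rcases hi with h | h <;> simp [hji, h]
  · rcases hi with h | h
    · simp [h]
    · simp [eq_zero_of_sum_eq_one_of_eq_one hf hsum h hji]

end

theorem label_transition_diagonal_iff_general
    {S Y : Type*} [Fintype S] [Fintype Y] [DecidableEq Y]
    (Q : S → Y → ℝ)
    (h01 : ∀ x y, Q x y ∈ Set.Icc (0:ℝ) 1)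
    (hrow : ∀ x, ∑ y, Q x y = 1)
    (T : Y → Y → ℝ)
    (hT : ∀ y y', T y' y = ∑ x, (Q x y / ∑ x', Q x' y) * Q x y') :
    (∀ y y', T y' y = if y' = y then 1 else 0) ↔
      ((∀ x y, Q x y = 0 ∨ Q x y = 1) ∧ ∀ y, ∃ x, Q x y = 1) := by
  have hT' : ∀ y y', T y' y = (∑ x, Q x y * Q x y') / ∑ x, Q x y := fun y y' => by
    rw [hT, sum_div]
    exact sum_congr rfl fun x _ => div_mul_eq_mul_div _ _ _
  constructor
  · intro hdiag
    have hdiag' : ∀ y, (∑ x, Q x y * Q x y) / ∑ x, Q x y = 1 := fun y => by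
      simpa [hT'] using hdiag y y
    have hbin : ∀ x y, Q x y = 0 ∨ Q x y = 1 := fun x y =>
      (sum_mul_self_eq_sum_iff (h01 · y)).mp
        ((div_eq_one_iff_eq fun h0 => by simpa [h0] using hdiag' y).mp (hdiag' y)) x
    refine ⟨hbin, fun y => ?_⟩
    by_contra! hnone
    have hD : ∑ x, Q x y = 0 := sum_eq_zero fun x _ => (hbin x y).resolve_right (hnone x)
    simpa [hD] using hdiag' y
  · rintro ⟨hbin, hex⟩ y y'
    obtain ⟨x₀, hx₀⟩ := hex y
    have hpos : 0 < ∑ x, Q x y :=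
      sum_pos' (fun x _ => (h01 x y).1) ⟨x₀, mem_univ x₀, hx₀ ▸ one_pos⟩
    have hnum : ∑ x, Q x y * Q x y' = if y' = y then ∑ x, Q x y else 0 := by
      simp_rw [fun x => mul_eq_ite_of_sum_eq_one (fun y => (h01 x y).1) (hrow x) (hbin x y) y']
      split_ifs <;> simp
    rw [hT', hnum]
    split_ifs
    · exact div_self hpos.ne'
    · exact zero_div _

/-- Theorem 1: the label transition matrix is diagonal iff the model is
binary-valued and each label has a nonempty confident set. -/
theorem label_transition_diagonal_iff
    {S Y : Type*} [Fintype S] [Fintype Y] [DecidableEq Y] [Nonempty S] [Nonempty Y]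
    (Q : S → Y → ℝ)
    (h01 : ∀ x y, Q x y ∈ Set.Icc (0:ℝ) 1)
    (hrow : ∀ x, ∑ y, Q x y = 1)
    (T : Y → Y → ℝ)
    (hT : ∀ y y', T y' y = ∑ x, (Q x y / ∑ x', Q x' y) * Q x y') :
    (∀ y y', T y' y = if y' = y then 1 else 0) ↔
      ((∀ x y, Q x y = 0 ∨ Q x y = 1) ∧ ∀ y, ∃ x, Q x y = 1) :=
  label_transition_diagonal_iff_general Q h01 hrow T hT
end

section
/- Let S, Y be finite nonempty sets and Q : S → Y → [0,1] row-stochastic with positive column sums. Define P(x|y) = Q(y|x)/∑_{x'} Q(y|x'), the label transition matrix T(y'|y) = ∑_{x∈S} P(x|y)Q(y'|x), and the instance transition matrix S(x'|x) = ∑_y P(x'|y)Q(y|x). If T is the identity matrix, then for every y ∈ Y, the measure μ_y on S defined by μ_y(x) = Q(y|x) is stationary for the Markov chain with transition kernel S, i.e., ∑_{x∈S} S(x'|x) μ_y(x) = μ_y(x') for all x' ∈ S. -/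
/-!
Normalizing the columns of `Q` makes `P x y * Q x' y` symmetric in `x, x'`. Swapping the sums in
`∑ₓ K(x, x') Q(x, y)` and using this symmetry rewrites it as `∑_{y'} Q(x', y') T(y, y')`, which is
`Q(x', y)` once `T` is the identity.
-/

open Finset

theorem mul_swap_of_eq_div {S Y R : Type*} [Field R] {P Q : S → Y → R} {c : Y → R}
    (hP : ∀ x y, P x y = Q x y / c y) (x x' : S) (y : Y) :
    P x y * Q x' y = P x' y * Q x y := by
  rw [hP, hP]
  ring

theorem sum_kernel_mul_eq_sum_mul_labelTransition {S Y R : Type*} [Fintype S] [Fintype Y]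
    [CommSemiring R] {P Q : S → Y → R} (hsymm : ∀ x x' y, P x y * Q x' y = P x' y * Q x y)
    (y : Y) (x' : S) :
    ∑ x, (∑ y', P x' y' * Q x y') * Q x y = ∑ y', Q x' y' * ∑ x, P x y' * Q x y := by
  simp only [sum_mul, mul_sum]
  rw [sum_comm]
  refine sum_congr rfl fun y' _ => sum_congr rfl fun x _ => ?_
  rw [← hsymm, mul_comm (P x y'), mul_assoc]

theorem stationary_of_identity_label_transition_general
    {S Y : Type*} [Fintype S] [Fintype Y] [DecidableEq Y]
    (Q : S → Y → ℝ)
    (P : S → Y → ℝ) (hP : ∀ x y, P x y = Q x y / ∑ x', Q x' y)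
    (T : Y → Y → ℝ) (hT : ∀ y y', T y' y = ∑ x, P x y * Q x y')
    (K : S → S → ℝ) (hK : ∀ x x', K x x' = ∑ y, P x' y * Q x y)
    (hTid : ∀ y y', T y' y = if y' = y then 1 else 0) :
    ∀ (y : Y) (x' : S), ∑ x, K x x' * Q x y = Q x' y := by
  intro y x'
  calc ∑ x, K x x' * Q x y = ∑ y', Q x' y' * T y y' := by
        simp only [hK, hT]
        exact sum_kernel_mul_eq_sum_mul_labelTransition (mul_swap_of_eq_div hP) y x'
    _ = Q x' y := by simp [hTid]

/-- If the label transition matrix is the identity, then for each label `y`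
the measure `μ_y(x) = Q(y|x)` is stationary for the instance transition
Markov chain. -/
theorem stationary_of_identity_label_transition
    {S Y : Type*} [Fintype S] [Fintype Y] [DecidableEq Y] [Nonempty S] [Nonempty Y]
    (Q : S → Y → ℝ)
    (h01 : ∀ x y, Q x y ∈ Set.Icc (0:ℝ) 1)
    (hrow : ∀ x, ∑ y, Q x y = 1)
    (hcol : ∀ y, 0 < ∑ x, Q x y)
    (P : S → Y → ℝ) (hP : ∀ x y, P x y = Q x y / ∑ x', Q x' y)
    (T : Y → Y → ℝ) (hT : ∀ y y', T y' y = ∑ x, P x y * Q x y')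
    (K : S → S → ℝ) (hK : ∀ x x', K x x' = ∑ y, P x' y * Q x y)
    (hTid : ∀ y y', T y' y = if y' = y then 1 else 0) :
    ∀ (y : Y) (x' : S), ∑ x, K x x' * Q x y = Q x' y :=
  stationary_of_identity_label_transition_general Q P hP T hT K hK hTid
end

section
/- Let S, Y be finite nonempty sets and Q : S → Y → [0,1] row-stochastic with positive column sums, with induced instance transition Markov chain S(x'|x) = ∑_y (Q(y|x')/∑_{x''}Q(y|x''))·Q(y|x). If this Markov chain on S has exactly |Y| pairwise disjoint irreducible recurrent classes, then the label transition matrix T(y'|y) = ∑_x P(x|y)Q(y'|x) is the identity matrix. -/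
open Finset

/-!
Two states communicate in the instance transition chain exactly when they share a label of
positive probability, so the support of every label lies inside a single closed class, and every
class contains such a support. Sending a label to its class is therefore a surjection from `Y`
onto the `|Y|` classes, hence a bijection: distinct labels have disjoint supports. A stochastic
row with a single positive entry is a unit vector, which makes the label transition matrix the
identity.
-/

theorem Relation.ReflTransGen.mem_of_closed {α : Type*} {r : α → α → Prop} {s : Set α}
    (hs : ∀ a ∈ s, ∀ b, r a b → b ∈ s) {a b : α} (hab : Relation.ReflTransGen r a b)
    (ha : a ∈ s) : b ∈ s := by
  induction hab with
  | refl => exact ha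
  | tail _ hbc ih => exact hs _ ih _ hbc

section Labels

variable {S Y : Type*} {Q : S → Y → ℝ}

/-- The instance transition kernel `S(x' | x)`. -/
noncomputable def instanceTransition [Fintype S] [Fintype Y] (Q : S → Y → ℝ) (x x' : S) : ℝ :=
  ∑ y, (Q x' y / ∑ x'', Q x'' y) * Q x y

/-- The label transition matrix `T(y' | y)`. -/
noncomputable def labelTransition [Fintype S] (Q : S → Y → ℝ) (y y' : Y) : ℝ :=
  ∑ x, (Q x y / ∑ x', Q x' y) * Q x y'

theorem instanceTransition_pos_iff [Fintype S] [Fintype Y] (hQ : ∀ x y, 0 ≤ Q x y)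
    (hcol : ∀ y, 0 < ∑ x, Q x y) (x x' : S) : 0 < instanceTransition Q x x' ↔ ∃ y, 0 < Q x y ∧ 0 < Q x' y := by
  have hterm : ∀ y, 0 ≤ (Q x' y / ∑ x'', Q x'' y) * Q x y :=
    fun y => mul_nonneg (div_nonneg (hQ x' y) (hcol y).le) (hQ x y)
  simp only [instanceTransition, sum_pos_iff_of_nonneg fun y _ => hterm y, mem_univ,
    true_and, (hterm _).lt_iff_ne', (hQ _ _).lt_iff_ne', mul_ne_zero_iff, div_ne_zero_iff,
    (hcol _).ne', ne_eq, not_false_eq_true, and_comm]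

theorem mul_eq_ite_of_disjoint_supports [Fintype Y] [DecidableEq Y] (hQ : ∀ x y, 0 ≤ Q x y)
    (hrow : ∀ x, ∑ y, Q x y = 1) (hdisjoint : ∀ x y y', 0 < Q x y → 0 < Q x y' → y = y')
    (x : S) (y y' : Y) : Q x y * Q x y' = if y' = y then Q x y else 0 := by
  rcases (hQ x y).eq_or_lt with hzero | hpos
  · simp [← hzero]
  have hother : ∀ y'', y'' ≠ y → Q x y'' = 0 := fun y'' hne =>
    ((hQ x y'').eq_or_lt.resolve_right fun h => hne (hdisjoint x y'' y h hpos)).symm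
  have hone : Q x y = 1 := by
    rw [← hrow x, sum_eq_single y (fun y'' _ => hother y'') (by simp)]
  split_ifs with hy
  · rw [hy, hone, mul_one]
  · rw [hother y' hy, mul_zero]

theorem labelTransition_eq_ite_of_disjoint_supports [Fintype S] [Fintype Y] [DecidableEq Y]
    (hQ : ∀ x y, 0 ≤ Q x y) (hrow : ∀ x, ∑ y, Q x y = 1) (hcol : ∀ y, 0 < ∑ x, Q x y)
    (hdisjoint : ∀ x y y', 0 < Q x y → 0 < Q x y' → y = y') (y y' : Y) :
    labelTransition Q y y' = if y' = y then 1 else 0 := by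
  calc labelTransition Q y y'
      = (∑ x, Q x y * Q x y') / ∑ x, Q x y := by
        simp only [labelTransition, sum_div, div_mul_eq_mul_div]
    _ = (if y' = y then ∑ x, Q x y else 0) / ∑ x, Q x y := by
        simp only [mul_eq_ite_of_disjoint_supports hQ hrow hdisjoint, sum_ite_irrel,
          sum_const_zero]
    _ = if y' = y then 1 else 0 := by
        split_ifs
        · exact div_self (hcol y).ne'
        · exact zero_div _

end Labels

theorem eq_of_label_of_card_closed_classes_eq {S Y : Type*} [Fintype Y] {P : S → Y → Prop}
    {C : Finset (Finset S)} (hlabel : ∀ x, ∃ y, P x y) (hsupport : ∀ y, ∃ x, P x y)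
    (hcard : C.card = Fintype.card Y) (hdisj : (C : Set (Finset S)).PairwiseDisjoint id)
    (hne : ∀ c ∈ C, c.Nonempty)
    (hclosed : ∀ c ∈ C, ∀ x ∈ c, ∀ x', (∃ y, P x y ∧ P x' y) → x' ∈ c)
    (hcover : ∀ x, ∃ c ∈ C, x ∈ c) {x : S} {y y' : Y} (hy : P x y) (hy' : P x y') :
    y = y' := by
  choose x₀ hx₀ using hsupport
  choose cls hclsC hcls using fun y => hcover (x₀ y)
  have hmem : ∀ {x y}, P x y → x ∈ cls y := fun hxy =>
    hclosed _ (hclsC _) _ (hcls _) _ ⟨_, hx₀ _, hxy⟩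
  let g : Y → C := fun y => ⟨cls y, hclsC y⟩
  have hg : g.Surjective := by
    rintro ⟨c, hc⟩
    obtain ⟨x, hx⟩ := hne c hc
    obtain ⟨y, hxy⟩ := hlabel x
    exact ⟨y, Subtype.ext (hdisj.elim_finset (hclsC y) hc x (hmem hxy) hx)⟩
  have hginj : g.Injective :=
    ((Fintype.bijective_iff_surjective_and_card g).2 ⟨hg, by simp [hcard]⟩).1
  exact hginj (Subtype.ext (hdisj.elim_finset (hclsC y) (hclsC y') x (hmem hy) (hmem hy')))

theorem identity_label_transition_of_recurrent_classes_general
    {S Y : Type*} [Fintype S] [Fintype Y] [DecidableEq Y]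
    (Q : S → Y → ℝ)
    (h01 : ∀ x y, Q x y ∈ Set.Icc (0:ℝ) 1)
    (hrow : ∀ x, ∑ y, Q x y = 1)
    (hcol : ∀ y, 0 < ∑ x, Q x y)
    (K : S → S → ℝ)
    (hK : ∀ x x', K x x' = ∑ y, (Q x' y / ∑ x'', Q x'' y) * Q x y)
    (C : Finset (Finset S))
    (hcard : C.card = Fintype.card Y)
    (hdisj : ∀ c ∈ C, ∀ c' ∈ C, c ≠ c' → Disjoint c c')
    (hnonempty : ∀ c ∈ C, c.Nonempty)
    (hclosed : ∀ c ∈ C, ∀ x ∈ c, ∀ x' : S, 0 < K x x' → x' ∈ c)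
    (hall : ∀ x : S, (∃ c ∈ C, x ∈ c) ∨
      ∃ c ∈ C, ∃ x' ∈ c, Relation.ReflTransGen (fun a b : S => 0 < K a b) x x') :
    ∀ y y' : Y, (∑ x, (Q x y / ∑ x', Q x' y) * Q x y') = if y' = y then 1 else 0 := by
  have hQ : ∀ x y, 0 ≤ Q x y := fun x y => (h01 x y).1
  obtain rfl : K = instanceTransition Q := funext fun x => funext (hK x)
  have hpos := instanceTransition_pos_iff hQ hcol
  have : Std.Symm fun a b => 0 < instanceTransition Q a b :=
    ⟨fun a b h => (hpos b a).2 (((hpos a b).1 h).imp fun _ => And.symm)⟩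
  have hcover : ∀ x, ∃ c ∈ C, x ∈ c := fun x =>
    (hall x).elim id fun ⟨c, hc, _, hx', hreach⟩ =>
      ⟨c, hc, (symm hreach).mem_of_closed (hclosed c hc) hx'⟩
  have hlabel : ∀ x, ∃ y, 0 < Q x y := fun x => by
    simpa using exists_lt_of_sum_lt (s := univ) (f := 0) (g := Q x) (by simp [hrow])
  have hsupport : ∀ y, ∃ x, 0 < Q x y := fun y => by
    simpa using exists_lt_of_sum_lt (s := univ) (f := 0) (g := (Q · y)) (by simpa using hcol y)
  have hdisjoint : ∀ x y y', 0 < Q x y → 0 < Q x y' → y = y' := fun x y y' =>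
    eq_of_label_of_card_closed_classes_eq hlabel hsupport hcard
      (fun c hc c' hc' => hdisj c hc c' hc') hnonempty
      (fun c hc x hx x' h => hclosed c hc x hx x' ((hpos x x').2 h)) hcover
  exact labelTransition_eq_ite_of_disjoint_supports hQ hrow hcol hdisjoint

/-- 'Only if' direction of Theorem 3: if the instance transition Markov
chain has exactly `|Y|` pairwise disjoint irreducible recurrent (closed
communicating) classes, then the label transition matrix is the identity.
A recurrent class is encoded as a nonempty closed set on which any two
states communicate through paths of positive transition probability. -/
theorem identity_label_transition_of_recurrent_classes
    {S Y : Type*} [Fintype S] [Fintype Y] [DecidableEq S] [DecidableEq Y]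
    [Nonempty S] [Nonempty Y]
    (Q : S → Y → ℝ)
    (h01 : ∀ x y, Q x y ∈ Set.Icc (0:ℝ) 1)
    (hrow : ∀ x, ∑ y, Q x y = 1)
    (hcol : ∀ y, 0 < ∑ x, Q x y)
    (K : S → S → ℝ)
    (hK : ∀ x x', K x x' = ∑ y, (Q x' y / ∑ x'', Q x'' y) * Q x y)
    (C : Finset (Finset S))
    (hcard : C.card = Fintype.card Y)
    (hdisj : ∀ c ∈ C, ∀ c' ∈ C, c ≠ c' → Disjoint c c')
    (hnonempty : ∀ c ∈ C, c.Nonempty)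
    (hclosed : ∀ c ∈ C, ∀ x ∈ c, ∀ x' : S, 0 < K x x' → x' ∈ c)
    (hirr : ∀ c ∈ C, ∀ x ∈ c, ∀ x' ∈ c,
      Relation.ReflTransGen (fun a b : S => 0 < K a b) x x')
    (hall : ∀ x : S, (∃ c ∈ C, x ∈ c) ∨
      ∃ c ∈ C, ∃ x' ∈ c, Relation.ReflTransGen (fun a b : S => 0 < K a b) x x') :
    ∀ y y' : Y, (∑ x, (Q x y / ∑ x', Q x' y) * Q x y') = if y' = y then 1 else 0 :=
  identity_label_transition_of_recurrent_classes_general Q h01 hrow hcol K hK C hcard hdisj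
    hnonempty hclosed hall
end
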